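/- arXiv:2604.06982 — 2 statements merged into one kernel-verified Lean document; each statement's English description precedes it below -/
import Mathlib

section
/- Let A be a group with subgroups H, K and isomorphism θ : H → K, and suppose there is a ∈ A \ H with a⁻¹ H a ∩ K = {1}. In the HNN extension G = HNN(A, H, K, θ) with stable letter w, the subgroup generated by a and w contains a nonabelian free subgroup; in particular, ⟨a, w⟩ is not amenable when the reduced words involving genuine pinch-free alternations are all nontrivial. -/
/-!
If `a ∉ B` put `d = a`; otherwise `d = a⁻¹ φ⁻¹(a) a` lies in `⟨a, t⟩`, and outside `B` by the
hypothesis on `a`. Then `t` and `d t a` generate a free group: writing a reduced word in them out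
letter by letter gives a reduced word of the HNN extension with one stable letter per letter,
because a pinch `t g t⁻¹` would need `g ∈ {a, a⁻¹}` to lie in `A` and a pinch `t⁻¹ g t` would need
`g ∈ {d, d⁻¹}` to lie in `B`. By Britton's lemma the word is nontrivial.
-/

namespace HNNExtension

variable {G : Type*} [Group G] {A B : Subgroup G} {α : Type*} (u v : α → G)

/-- The letter `(x, b)` of `FreeGroup α` is sent to `(of (u x) * t * of (v x)) ^ (±1)`, which is
`of (letterHead u v σ) * t ^ letterSign σ * of (letterTail u v σ)`. -/
def letterHead (σ : α × Bool) : G := if σ.2 then u σ.1 else (v σ.1)⁻¹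

def letterTail (σ : α × Bool) : G := if σ.2 then v σ.1 else (u σ.1)⁻¹

def letterSign (σ : α × Bool) : ℤˣ := if σ.2 then 1 else -1

def wordHead : List (α × Bool) → G
  | [] => 1
  | σ :: _ => letterHead u v σ

/-- Together with `wordHead`, the reduced word of the HNN extension spelling out the image of a
word in the letters. -/
def wordPairs : List (α × Bool) → List (ℤˣ × G)
  | [] => []
  | σ :: L => (letterSign σ, letterTail u v σ * wordHead u v L) :: wordPairs L

variable {u v}

theorem letterTail_mul_letterHead_notMem
    (hv : ∀ x y, x ≠ y → v x * (v y)⁻¹ ∉ A) (hu : ∀ x y, x ≠ y → (u x)⁻¹ * u y ∉ B)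
    {σ τ : α × Bool} (hne : σ.2 ≠ τ.2) (hred : σ.1 = τ.1 → σ.2 = τ.2) :
    letterTail u v σ * letterHead u v τ ∉ toSubgroup A B (letterSign σ) := by
  obtain ⟨x, b⟩ := σ
  obtain ⟨y, c⟩ := τ
  have hxy : x ≠ y := fun h => hne (hred h)
  cases b <;> cases c <;> simp_all [letterTail, letterHead, letterSign]

theorem isChain_wordPairs
    (hv : ∀ x y, x ≠ y → v x * (v y)⁻¹ ∉ A) (hu : ∀ x y, x ≠ y → (u x)⁻¹ * u y ∉ B) :
    ∀ {L : List (α × Bool)}, FreeGroup.IsReduced L →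
    (wordPairs u v L).IsChain (fun p q => p.2 ∈ toSubgroup A B p.1 → p.1 = q.1)
  | [], _ => List.isChain_nil
  | [σ], _ => List.isChain_singleton _
  | σ :: τ :: L, h => by
    rw [FreeGroup.isReduced_cons_cons] at h
    refine List.isChain_cons_cons.mpr ⟨fun hmem => ?_, isChain_wordPairs hv hu h.2⟩
    by_contra hsign
    exact letterTail_mul_letterHead_notMem hv hu (fun h => hsign (by simp [letterSign, h])) h.1 hmem

variable (φ : A ≃* B)

theorem prod_wordPairs (L : List (α × Bool)) :
    of (wordHead u v L) * ((wordPairs u v L).map fun p => t ^ (p.1 : ℤ) * of p.2).prod =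
      (L.map fun σ => cond σ.2 (of (u σ.1) * t * of (v σ.1))
        (of (u σ.1) * t * of (v σ.1) : HNNExtension G A B φ)⁻¹).prod := by
  induction L with
  | nil => simp [wordHead, wordPairs]
  | cons σ L ih =>
    obtain ⟨x, b⟩ := σ
    rw [List.map_cons, List.prod_cons, ← ih]
    cases b <;> simp [wordHead, wordPairs, letterHead, letterTail, letterSign, mul_assoc]

theorem injective_lift_of_mul_t_mul
    (hv : ∀ x y, x ≠ y → v x * (v y)⁻¹ ∉ A) (hu : ∀ x y, x ≠ y → (u x)⁻¹ * u y ∉ B) :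
    Function.Injective
      (FreeGroup.lift fun x => (of (u x) * t * of (v x) : HNNExtension G A B φ)) := by
  classical
  rw [injective_iff_map_eq_one]
  intro w hw
  rw [← FreeGroup.toWord_eq_nil_iff]
  by_contra hne
  obtain ⟨σ, L, hσL⟩ := List.exists_cons_of_ne_nil hne
  let R : NormalWord.ReducedWord G A B :=
    ⟨wordHead u v w.toWord, wordPairs u v w.toWord,
      isChain_wordPairs hv hu FreeGroup.isReduced_toWord⟩
  have hR : R.prod φ = 1 := by
    rw [← hw, ← FreeGroup.mk_toWord (x := w), FreeGroup.lift_mk]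
    exact prod_wordPairs φ _
  have := ReducedWord.toList_eq_nil_of_mem_of_range φ R ⟨1, by rw [map_one, hR]⟩
  simp [R, hσL, wordPairs] at this

theorem exists_notMem_of_mem_closure {a : G} (ha : a ∉ A)
    (hmal : ∀ h ∈ A, a⁻¹ * h * a ∈ B → h = 1) :
    ∃ d ∉ B, of d ∈ Subgroup.closure ({of a, t} : Set (HNNExtension G A B φ)) := by
  have haS : of a ∈ Subgroup.closure ({of a, t} : Set (HNNExtension G A B φ)) :=
    Subgroup.subset_closure (by simp)
  have htS : t ∈ Subgroup.closure ({of a, t} : Set (HNNExtension G A B φ)) :=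
    Subgroup.subset_closure (by simp)
  by_cases haB : a ∈ B
  · set c : A := φ.symm ⟨a, haB⟩
    refine ⟨a⁻¹ * c * a, fun hmem => ha ?_, ?_⟩
    · have ha1 : a = 1 := by
        simpa [c] using (Subtype.ext (hmal c c.2 hmem) : c = 1)
      exact ha1 ▸ A.one_mem
    · rw [map_mul, map_mul, map_inv, equiv_symm_eq_conj]
      exact mul_mem (mul_mem (inv_mem haS) (mul_mem (mul_mem (inv_mem htS) haS) htS)) haS
  · exact ⟨a, haB, haS⟩

end HNNExtension

open HNNExtension

/-- Let `G` be a group with subgroups `A`, `B` and `φ : A ≃* B`, and suppose `a ∈ G \ A`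
satisfies `a⁻¹ A a ∩ B = {1}`. Then in `HNNExtension G A B φ` with stable letter `t`, the
subgroup generated by `a` and `t` contains a nonabelian free subgroup (a copy of the free
group on two generators). -/
theorem stmt11 {G : Type*} [Group G] {A B : Subgroup G} (φ : A ≃* B)
    (a : G) (ha : a ∉ A)
    (hmal : ∀ h ∈ A, a⁻¹ * h * a ∈ B → h = 1) :
    ∃ f : FreeGroup Bool →* HNNExtension G A B φ, Function.Injective f ∧
      ∀ x, f x ∈ Subgroup.closure
        ({HNNExtension.of a, HNNExtension.t} : Set (HNNExtension G A B φ)) := by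
  obtain ⟨d, hdB, hdS⟩ := exists_notMem_of_mem_closure φ ha hmal
  set S := Subgroup.closure ({of a, t} : Set (HNNExtension G A B φ))
  have haS : of a ∈ S := Subgroup.subset_closure (by simp)
  have htS : t ∈ S := Subgroup.subset_closure (by simp)
  let u : Bool → G := fun b => if b then 1 else d
  let v : Bool → G := fun b => if b then 1 else a
  refine ⟨FreeGroup.lift fun x => of (u x) * t * of (v x), ?_, fun x => ?_⟩
  · refine injective_lift_of_mul_t_mul φ ?_ ?_ <;> intro x y hxy <;> cases x <;> cases y <;>
      simp_all [u, v]
  · refine FreeGroup.range_lift_le ?_ ⟨x, rfl⟩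
    rintro _ ⟨b, rfl⟩
    cases b
    · exact mul_mem (mul_mem hdS htS) haS
    · simpa [u, v] using htS
end

section
/- Let G = A *_H B be an amalgamated free product of groups with a ∈ A \ H satisfying a⁻¹ H a ∩ H = {1}, and b, c ∈ B \ H with c⁻¹ b ∉ H. Set w_i = (ba)^i (ca) (ba)^{3-i} for i = 1, 2, 3. Then for i ≠ j, and for any g, g' ∈ G such that the normal forms of w_i g and w_j g' involve no cancellation into the prefixes w_i, w_j respectively, we have w_i g ≠ w_j g'; i.e., the sets of elements with normal form beginning with w_i, i = 1, 2, 3, are pairwise disjoint. -/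
open Monoid Function

section Aux

variable {H : Type*} [Group H] {G : Bool → Type*} [∀ i, Group (G i)] {φ : ∀ i, H →* G i}



theorem my_reduced_cons {i : Bool} {x : G i} {w : CoprodI.Word G}
    (hx : x ∉ (φ i).range) (hw : PushoutI.Reduced φ w)
    (h2 : w.fstIdx ≠ some i) (h1 : x ≠ 1) :
    PushoutI.Reduced φ (CoprodI.Word.cons x w h2 h1) := by
  intro g hg
  rcases List.mem_cons.mp hg with rfl | h
  · exact hx
  · exact hw g h

theorem my_prod_cons {i : Bool} (x : G i) (w : CoprodI.Word G) (h2 : w.fstIdx ≠ some i)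
    (h1 : x ≠ 1) :
    PushoutI.ofCoprodI (φ := φ) (CoprodI.Word.cons x w h2 h1).prod =
      PushoutI.of (φ := φ) i x * PushoutI.ofCoprodI (φ := φ) w.prod := by
  rw [CoprodI.Word.prod_cons, map_mul, PushoutI.ofCoprodI_of]

theorem my_iter_true (x : G true) (y : G false)
    (hx : x ∉ (φ true).range) (hy : y ∉ (φ false).range) :
    ∀ (n : ℕ) (w : CoprodI.Word G), PushoutI.Reduced φ w → w.fstIdx = some true →
    ∃ w' : CoprodI.Word G, PushoutI.Reduced φ w' ∧ w'.fstIdx = some true ∧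
      PushoutI.ofCoprodI (φ := φ) w'.prod =
        (PushoutI.of (φ := φ) true x * PushoutI.of (φ := φ) false y) ^ n *
          PushoutI.ofCoprodI (φ := φ) w.prod
  | 0, w, hw, hf => ⟨w, hw, hf, by simp⟩
  | (n+1), w, hw, hf => by
    obtain ⟨w', h1, h2, h3⟩ := my_iter_true x y hx hy n w hw hf
    have hy1 : y ≠ 1 := fun h => hy (h ▸ one_mem _)
    have hx1 : x ≠ 1 := fun h => hx (h ▸ one_mem _)
    have hne1 : w'.fstIdx ≠ some false := by rw [h2]; simp
    have hne2 : (CoprodI.Word.cons y w' hne1 hy1).fstIdx ≠ some true := by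
      rw [CoprodI.Word.fstIdx_cons]; simp
    refine ⟨CoprodI.Word.cons x (CoprodI.Word.cons y w' hne1 hy1) hne2 hx1,
      my_reduced_cons hx (my_reduced_cons hy h1 hne1 hy1) hne2 hx1,
      CoprodI.Word.fstIdx_cons _ _ _ _, ?_⟩
    rw [my_prod_cons, my_prod_cons, h3, pow_succ']
    group

theorem my_iter_false (x : G true) (y : G false)
    (hx : x ∉ (φ true).range) (hy : y ∉ (φ false).range) :
    ∀ (n : ℕ) (w : CoprodI.Word G), PushoutI.Reduced φ w → w.fstIdx = some false →
    ∃ w' : CoprodI.Word G, PushoutI.Reduced φ w' ∧ w'.fstIdx = some false ∧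
      PushoutI.ofCoprodI (φ := φ) w'.prod =
        (PushoutI.of (φ := φ) false y * PushoutI.of (φ := φ) true x) ^ n *
          PushoutI.ofCoprodI (φ := φ) w.prod
  | 0, w, hw, hf => ⟨w, hw, hf, by simp⟩
  | (n+1), w, hw, hf => by
    obtain ⟨w', h1, h2, h3⟩ := my_iter_false x y hx hy n w hw hf
    have hy1 : y ≠ 1 := fun h => hy (h ▸ one_mem _)
    have hx1 : x ≠ 1 := fun h => hx (h ▸ one_mem _)
    have hne1 : w'.fstIdx ≠ some true := by rw [h2]; simp
    have hne2 : (CoprodI.Word.cons x w' hne1 hx1).fstIdx ≠ some false := by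
      rw [CoprodI.Word.fstIdx_cons]; simp
    refine ⟨CoprodI.Word.cons y (CoprodI.Word.cons x w' hne1 hx1) hne2 hy1,
      my_reduced_cons hy (my_reduced_cons hx h1 hne1 hx1) hne2 hy1,
      CoprodI.Word.fstIdx_cons _ _ _ _, ?_⟩
    rw [my_prod_cons, my_prod_cons, h3, pow_succ']
    group

theorem my_indices_eq (hφ : ∀ i, Injective (φ i)) {u v : CoprodI.Word G}
    (hu : PushoutI.Reduced φ u) (hv : PushoutI.Reduced φ v)
    (h : PushoutI.ofCoprodI (φ := φ) u.prod = PushoutI.ofCoprodI (φ := φ) v.prod) :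
    u.toList.map Sigma.fst = v.toList.map Sigma.fst := by
  obtain ⟨d⟩ := PushoutI.NormalWord.transversal_nonempty φ hφ
  obtain ⟨u', hu1, hu2⟩ := hu.exists_normalWord_prod_eq d
  obtain ⟨v', hv1, hv2⟩ := hv.exists_normalWord_prod_eq d
  rw [← hu2, ← hv2, PushoutI.NormalWord.prod_injective (hu1.trans (h.trans hv1.symm))]


theorem my_key (hφ : ∀ i, Function.Injective (φ i))
    (a : G true) (ha : a ∉ (φ true).range)
    (b c : G false) (hb : b ∉ (φ false).range) (hc : c ∉ (φ false).range)
    (hcb : c⁻¹ * b ∉ (φ false).range)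
    (i j : ℕ) (hi1 : 1 ≤ i) (hi3 : i ≤ 3) (hj1 : 1 ≤ j) (hj3 : j ≤ 3) (hlt : i < j)
    (g g' : PushoutI φ)
    (hg : g ∈ (PushoutI.base φ).range ∨
      ∃ w : CoprodI.Word G, PushoutI.Reduced φ w ∧
        (w.toList.map Sigma.fst).head? = some false ∧
        PushoutI.ofCoprodI (φ := φ) w.prod = g)
    (hg' : g' ∈ (PushoutI.base φ).range ∨
      ∃ w : CoprodI.Word G, PushoutI.Reduced φ w ∧
        (w.toList.map Sigma.fst).head? = some false ∧
        PushoutI.ofCoprodI (φ := φ) w.prod = g') :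
    (PushoutI.of (φ := φ) false b * PushoutI.of (φ := φ) true a) ^ i *
        (PushoutI.of (φ := φ) false c * PushoutI.of (φ := φ) true a) *
        (PushoutI.of (φ := φ) false b * PushoutI.of (φ := φ) true a) ^ (3 - i) * g ≠
      (PushoutI.of (φ := φ) false b * PushoutI.of (φ := φ) true a) ^ j *
        (PushoutI.of (φ := φ) false c * PushoutI.of (φ := φ) true a) *
        (PushoutI.of (φ := φ) false b * PushoutI.of (φ := φ) true a) ^ (3 - j) * g' := by
  intro heq
  set A := PushoutI.of (φ := φ) true a with hA
  set B := PushoutI.of (φ := φ) false b with hB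
  set C := PushoutI.of (φ := φ) false c with hC
  obtain ⟨k', hk'⟩ : ∃ k', j = i + k' + 1 := ⟨j - i - 1, by omega⟩
  obtain ⟨m, hm⟩ : ∃ m, 3 - j = m := ⟨3 - j, rfl⟩
  have h3i : 3 - i = m + k' + 1 := by omega
  -- non-membership facts
  have hainv : a⁻¹ ∉ (φ true).range := fun h => ha ((φ true).range.inv_mem_iff.mp h)
  have hbinv : b⁻¹ ∉ (φ false).range := fun h => hb ((φ false).range.inv_mem_iff.mp h)
  have hcinv : c⁻¹ ∉ (φ false).range := fun h => hc ((φ false).range.inv_mem_iff.mp h)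
  have hbc : b⁻¹ * c ∉ (φ false).range := by
    rintro ⟨h0, hh0⟩
    exact hcb ⟨h0⁻¹, by rw [map_inv, hh0]; group⟩
  have ha1 : a ≠ 1 := fun h => ha (h ▸ one_mem _)
  have hbc1 : b⁻¹ * c ≠ 1 := fun h => hbc (h ▸ one_mem _)
  have hainv1 : a⁻¹ ≠ 1 := fun h => hainv (h ▸ one_mem _)
  have hcinv1 : c⁻¹ ≠ 1 := fun h => hcinv (h ▸ one_mem _)
  -- construct `t` with `ofCoprodI t.prod = A * (B*A)^(3-i) * g`
  obtain ⟨t, ht_red, ht_fst, ht_prod⟩ :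
      ∃ t : CoprodI.Word G, PushoutI.Reduced φ t ∧ t.fstIdx = some true ∧
        PushoutI.ofCoprodI (φ := φ) t.prod = A * (B * A) ^ (3 - i) * g := by
    rcases hg with ⟨h, hh⟩ | ⟨u, hu_red, hu_head, hu_prod⟩
    · -- g = base h
      have haφ : a * φ true h ∉ (φ true).range := by
        rintro ⟨y, hy⟩
        exact ha ⟨y * h⁻¹, by rw [map_mul, map_inv, hy]; group⟩
      have haφ1 : a * φ true h ≠ 1 := fun h' => haφ (h' ▸ one_mem _)
      have hne : (CoprodI.Word.empty (M := G)).fstIdx ≠ some true := by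
        simp [CoprodI.Word.fstIdx, CoprodI.Word.empty]
      have hred0 : PushoutI.Reduced φ (CoprodI.Word.empty (M := G)) := by
        intro x hx
        simp [CoprodI.Word.empty] at hx
      obtain ⟨t, h1, h2, h3⟩ := my_iter_true (φ := φ) a b ha hb (3 - i)
        (CoprodI.Word.cons (a * φ true h) CoprodI.Word.empty hne haφ1)
        (my_reduced_cons haφ hred0 hne haφ1) (CoprodI.Word.fstIdx_cons _ _ _ _)
      refine ⟨t, h1, h2, ?_⟩
      rw [h3, my_prod_cons]
      have hsc : A * (B * A) ^ (3 - i) = (A * B) ^ (3 - i) * A := by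
        have hsj : SemiconjBy A (B * A) (A * B) := (mul_assoc A B A).symm
        exact (hsj.pow_right (3 - i)).eq
      rw [map_mul, PushoutI.of_apply_eq_base φ true h, hh]
      simp only [CoprodI.Word.prod_empty, map_one, mul_one, ← hA, ← hB]
      rw [← mul_assoc, ← hsc, mul_assoc]
    · -- g is a reduced word starting with false
      have hu_fst : u.fstIdx = some false := by
        simp only [CoprodI.Word.fstIdx]
        rw [← List.head?_map, hu_head]
      obtain ⟨u', h1, h2, h3⟩ := my_iter_false (φ := φ) a b ha hb (3 - i) u hu_red hu_fst
      have hne : u'.fstIdx ≠ some true := by rw [h2]; simp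
      refine ⟨CoprodI.Word.cons a u' hne ha1, my_reduced_cons ha h1 hne ha1,
        CoprodI.Word.fstIdx_cons _ _ _ _, ?_⟩
      rw [my_prod_cons, h3, hu_prod, ← hA, ← hB, mul_assoc]
  -- build the full word W
  have hfst1 : t.fstIdx ≠ some false := by rw [ht_fst]; simp
  set w1 := CoprodI.Word.cons (b⁻¹ * c) t hfst1 hbc1 with hw1
  have hw1_red : PushoutI.Reduced φ w1 := my_reduced_cons hbc ht_red hfst1 hbc1
  have hfst2 : w1.fstIdx ≠ some true := by rw [hw1, CoprodI.Word.fstIdx_cons]; simp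
  set w2 := CoprodI.Word.cons a⁻¹ w1 hfst2 hainv1 with hw2
  obtain ⟨w3, hw3_red, hw3_fst, hw3_prod⟩ := my_iter_true (φ := φ) a⁻¹ b⁻¹ hainv hbinv k'
    w2 (my_reduced_cons hainv hw1_red hfst2 hainv1) (CoprodI.Word.fstIdx_cons _ _ _ _)
  have hfst3 : w3.fstIdx ≠ some false := by rw [hw3_fst]; simp
  set w4 := CoprodI.Word.cons c⁻¹ w3 hfst3 hcinv1 with hw4
  have hfst4 : w4.fstIdx ≠ some true := by rw [hw4, CoprodI.Word.fstIdx_cons]; simp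
  set w5 := CoprodI.Word.cons a⁻¹ w4 hfst4 hainv1 with hw5
  obtain ⟨W, hW_red, hW_fst, hW_prod⟩ := my_iter_true (φ := φ) a⁻¹ b⁻¹ hainv hbinv m
    w5 (my_reduced_cons hainv (my_reduced_cons hcinv hw3_red hfst3 hcinv1) hfst4 hainv1)
    (CoprodI.Word.fstIdx_cons _ _ _ _)
  have hWprod : PushoutI.ofCoprodI (φ := φ) W.prod =
      (A⁻¹ * B⁻¹) ^ m * A⁻¹ * C⁻¹ * (A⁻¹ * B⁻¹) ^ k' * A⁻¹ * (B⁻¹ * C) *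
        (A * (B * A) ^ (3 - i) * g) := by
    rw [hW_prod, hw5, my_prod_cons, hw4, my_prod_cons, hw3_prod, hw2, my_prod_cons,
      hw1, my_prod_cons, ht_prod]
    simp only [map_inv, map_mul, ← hA, ← hB, ← hC]
    group
  -- show g' = ofCoprodI W.prod
  have hg'eq : g' = PushoutI.ofCoprodI (φ := φ) W.prod := by
    have h0 : g' = ((B * A) ^ j * (C * A) * (B * A) ^ (3 - j))⁻¹ *
        ((B * A) ^ j * (C * A) * (B * A) ^ (3 - j) * g') := by group
    rw [← heq] at h0
    rw [h0, hWprod, hm, h3i, hk']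
    simp only [← mul_inv_rev, inv_pow]
    group
    rw [show (-1 - (k' : ℤ)) = -(k' : ℤ) + -1 by ring, zpow_add]
    simp only [zpow_neg_one, mul_inv_rev]
    group
  -- derive a contradiction
  rcases hg' with ⟨h', hh'⟩ | ⟨v, hv_red, hv_head, hv_prod⟩
  · have hmem : PushoutI.ofCoprodI (φ := φ) W.prod ∈ (PushoutI.base φ).range := by
      rw [← hg'eq, ← hh']
      exact ⟨h', rfl⟩
    have := PushoutI.Reduced.eq_empty_of_mem_range hφ hW_red hmem
    rw [this] at hW_fst
    simp [CoprodI.Word.fstIdx, CoprodI.Word.empty] at hW_fst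
  · have hidx := my_indices_eq hφ hW_red hv_red (by rw [hv_prod, ← hg'eq])
    have h1 : (W.toList.map Sigma.fst).head? = some true := by
      rw [List.head?_map]
      exact hW_fst
    rw [hidx, hv_head] at h1
    simp at h1

end Aux




/-- In `G = A *_H B` (pushout of injective maps, `G true = A`, `G false = B`) with
`a ∈ A \ H` satisfying `a⁻¹ H a ∩ H = {1}`, and `b, c ∈ B \ H` with `c⁻¹ b ∉ H`, set
`w_k = (ba)^k (ca) (ba)^{3-k}`. For `i ≠ j` in `{1,2,3}`, and `g, g'` whose normal forms do
not cancel into the prefixes (i.e. `g, g'` lie in `H` or are represented by reduced words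
starting with a `B \ H` letter), we have `w_i g ≠ w_j g'`. -/
theorem stmt12 {H : Type*} [Group H] {G : Bool → Type*} [∀ i, Group (G i)]
    (φ : ∀ i, H →* G i) (hφ : ∀ i, Function.Injective (φ i))
    (a : G true) (ha : a ∉ (φ true).range)
    (hmal : ∀ h : H, a⁻¹ * φ true h * a ∈ (φ true).range → φ true h = 1)
    (b c : G false) (hb : b ∉ (φ false).range) (hc : c ∉ (φ false).range)
    (hcb : c⁻¹ * b ∉ (φ false).range)
    (wa wb wc : Monoid.PushoutI φ)
    (hwa : wa = Monoid.PushoutI.of (φ := φ) true a)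
    (hwb : wb = Monoid.PushoutI.of (φ := φ) false b)
    (hwc : wc = Monoid.PushoutI.of (φ := φ) false c)
    (i j : ℕ) (hi1 : 1 ≤ i) (hi3 : i ≤ 3) (hj1 : 1 ≤ j) (hj3 : j ≤ 3) (hij : i ≠ j)
    (g g' : Monoid.PushoutI φ)
    (hg : g ∈ (Monoid.PushoutI.base φ).range ∨
      ∃ w : Monoid.CoprodI.Word G, Monoid.PushoutI.Reduced φ w ∧
        (w.toList.map Sigma.fst).head? = some false ∧
        Monoid.PushoutI.ofCoprodI (φ := φ) w.prod = g)
    (hg' : g' ∈ (Monoid.PushoutI.base φ).range ∨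
      ∃ w : Monoid.CoprodI.Word G, Monoid.PushoutI.Reduced φ w ∧
        (w.toList.map Sigma.fst).head? = some false ∧
        Monoid.PushoutI.ofCoprodI (φ := φ) w.prod = g') :
    (wb * wa) ^ i * (wc * wa) * (wb * wa) ^ (3 - i) * g ≠
      (wb * wa) ^ j * (wc * wa) * (wb * wa) ^ (3 - j) * g' := by
  subst hwa hwb hwc
  rcases hij.lt_or_gt with h | h
  · exact my_key hφ a ha b c hb hc hcb i j hi1 hi3 hj1 hj3 h g g' hg hg'
  · exact (my_key hφ a ha b c hb hc hcb j i hj1 hj3 hi1 hi3 h g' g hg' hg).symm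
end
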